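/- For all nonnegative integers k ≤ n, 2^k·k!·S_B(n,k) = Σ_{ℓ=0}^{k} B_{n,ℓ}·C(n-ℓ, k-ℓ). -/

import Mathlib

open Finset

/-- Type B Stirling numbers of the second kind:
`S_B(n,k) = S_B(n-1,k-1) + (2k+1) S_B(n-1,k)`, `S_B(0,k) = δ_{0k}`. -/
def stirlingB : ℕ → ℕ → ℕ
  | 0, 0 => 1
  | 0, _ + 1 => 0
  | n + 1, 0 => 1 * stirlingB n 0
  | n + 1, k + 1 => stirlingB n k + (2 * (k + 1) + 1) * stirlingB n (k + 1)

/-- A signed permutation of `{1,...,n}`, encoded as an (unsigned) permutation together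
with a sign for each position. -/
abbrev SignedPerm (n : ℕ) := Equiv.Perm (Fin n) × (Fin n → Bool)

/-- The value `π_i ∈ {±1,...,±n}` (1-indexed) of a signed permutation; `π_0 = 0`, and
`π_i = 0` for `i > n`. -/
def spVal {n : ℕ} (π : SignedPerm n) (i : ℕ) : ℤ :=
  if h : 1 ≤ i ∧ i ≤ n then
    (if π.2 ⟨i - 1, by omega⟩ then -(((π.1 ⟨i - 1, by omega⟩ : Fin n) : ℤ) + 1)
     else ((π.1 ⟨i - 1, by omega⟩ : Fin n) : ℤ) + 1)
  else 0

/-- The type B descent set `Des_B(π) = {i ∈ {0,...,n-1} : π_i > π_{i+1}}` (with `π_0 = 0`). -/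
def desSetB {n : ℕ} (π : SignedPerm n) : Finset ℕ :=
  (Finset.range n).filter fun i => spVal π (i + 1) < spVal π i

/-- The type B Eulerian number `B_{n,ℓ}`: the number of signed permutations of `{1,...,n}`
with `ℓ` type B descents. -/
def eulerianB (n ℓ : ℕ) : ℕ :=
  (Finset.univ.filter fun π : SignedPerm n => (desSetB π).card = ℓ).card

/-!
Inserting `±(n + 1)` into one of the `2(n + 1)` slots of a signed permutation of `[n]` with `d`
descents keeps `d` descents in exactly `2d + 1` slots (at a descent, or `+(n + 1)` at the end) and
creates one more descent in the others, so
`B_{n+1,m+1} = (2m + 3) B_{n,m+1} + (2(n - m) + 1) B_{n,m}`.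
Using this and `(j + 1) C(N, j + 1) + j C(N, j) = N C(N, j)`, the sums
`F(n,k) = ∑ ℓ, B_{n,ℓ} C(n - ℓ, k - ℓ)` satisfy
`F(n+1,k+1) = 2(k + 1) F(n,k) + (2k + 3) F(n,k+1)`, which is the recurrence of `2^k k! S_B(n,k)`.
-/

def descentCount (v : ℕ → ℤ) (n : ℕ) : ℕ := #{i ∈ range n | v (i + 1) < v i}

lemma descentCount_insert {v w : ℕ → ℤ} {j n : ℕ} (hj : j ≤ n)
    (hlow : ∀ p ≤ j, w p = v p) (hhigh : ∀ p, j < p → p ≤ n → w (p + 1) = v p) :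
    descentCount w (n + 1) + (if j < n ∧ v (j + 1) < v j then 1 else 0)
      = descentCount v n + (if w (j + 1) < v j then 1 else 0)
        + (if j < n ∧ v (j + 1) < w (j + 1) then 1 else 0) := by
  obtain ⟨r, rfl⟩ := Nat.exists_eq_add_of_le hj
  have hhead : ∑ i ∈ range j, (if w (i + 1) < w i then 1 else 0)
      = ∑ i ∈ range j, (if v (i + 1) < v i then 1 else 0) :=
    sum_congr rfl fun i hi => by
      rw [hlow i (mem_range.mp hi).le, hlow (i + 1) (mem_range.mp hi)]
  simp only [descentCount, card_filter, add_assoc j r 1, sum_range_add, hhead,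
    sum_range_succ' _ r, add_zero]
  rcases r with _ | t
  · simp [hlow j le_rfl]
  · have htail :
        ∑ x ∈ range t, (if w (j + (x + 1 + 1) + 1) < w (j + (x + 1 + 1)) then 1 else 0)
        = ∑ x ∈ range t, (if v (j + (x + 1) + 1) < v (j + (x + 1)) then 1 else 0) :=
      sum_congr rfl fun x hx => by
        have := mem_range.mp hx
        rw [show j + (x + 1 + 1) = j + (x + 1) + 1 by ring, hhigh _ (by omega) (by omega),
          hhigh _ (by omega) (by omega)]
    simp only [sum_range_succ' _ t, htail, hlow j le_rfl, hhigh (j + 1) (by omega) (by omega)]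
    have hjt : j < j + (t + 1) := by omega
    simp only [hjt, true_and, zero_add, add_zero, add_assoc, Nat.reduceAdd]
    omega

def insertMaxPerm {n : ℕ} (σ : Equiv.Perm (Fin n)) (j : Fin (n + 1)) :
    Equiv.Perm (Fin (n + 1)) :=
  (finSuccEquiv' j).trans ((Equiv.optionCongr σ).trans (finSuccEquiv' (Fin.last n)).symm)

@[simp] lemma insertMaxPerm_self {n : ℕ} (σ : Equiv.Perm (Fin n)) (j : Fin (n + 1)) :
    insertMaxPerm σ j j = Fin.last n := by
  simp [insertMaxPerm, finSuccEquiv'_at, finSuccEquiv'_symm_none]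

@[simp] lemma insertMaxPerm_succAbove {n : ℕ} (σ : Equiv.Perm (Fin n)) (j : Fin (n + 1))
    (i : Fin n) : insertMaxPerm σ j (j.succAbove i) = (σ i).castSucc := by
  simp [insertMaxPerm, finSuccEquiv'_succAbove, finSuccEquiv'_symm_some, Fin.succAbove_last]

/-- Insert the value `n + 1`, with sign `-` if `s` and `+` otherwise, at position `j + 1`. -/
def insertMax {n : ℕ} (π : SignedPerm n) (j : Fin (n + 1)) (s : Bool) : SignedPerm (n + 1) :=
  (insertMaxPerm π.1 j, fun p => (finSuccEquiv' j p).elim s π.2)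

@[simp] lemma insertMax_fst {n : ℕ} (π : SignedPerm n) (j : Fin (n + 1)) (s : Bool) :
    (insertMax π j s).1 = insertMaxPerm π.1 j := rfl

@[simp] lemma insertMax_snd_self {n : ℕ} (π : SignedPerm n) (j : Fin (n + 1)) (s : Bool) :
    (insertMax π j s).2 j = s := by
  simp [insertMax, finSuccEquiv'_at]

@[simp] lemma insertMax_snd_succAbove {n : ℕ} (π : SignedPerm n) (j : Fin (n + 1)) (s : Bool)
    (i : Fin n) : (insertMax π j s).2 (j.succAbove i) = π.2 i := by
  simp [insertMax, finSuccEquiv'_succAbove]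

lemma insertMax_injective {n : ℕ} :
    Function.Injective fun x : SignedPerm n × (Fin (n + 1) × Bool) =>
      insertMax x.1 x.2.1 x.2.2 := by
  rintro ⟨π, j, s⟩ ⟨π', j', s'⟩ h
  simp only [insertMax, Prod.mk.injEq] at h
  obtain ⟨hperm, hsign⟩ := h
  obtain rfl : j = j' := (insertMaxPerm π.1 j).injective <| by
    rw [insertMaxPerm_self, hperm, insertMaxPerm_self]
  have hσ : π.1 = π'.1 := Equiv.ext fun i => Fin.castSucc_injective _ <| by
    rw [← insertMaxPerm_succAbove, ← insertMaxPerm_succAbove, hperm]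
  have hsgn : π.2 = π'.2 := funext fun i => by
    simpa [finSuccEquiv'_succAbove] using congrFun hsign (j.succAbove i)
  have hs : s = s' := by simpa [finSuccEquiv'_at] using congrFun hsign j
  rw [Prod.ext hσ hsgn, hs]

lemma insertMax_bijective {n : ℕ} :
    Function.Bijective fun x : SignedPerm n × (Fin (n + 1) × Bool) =>
      insertMax x.1 x.2.1 x.2.2 := by
  rw [Fintype.bijective_iff_injective_and_card]
  refine ⟨insertMax_injective, ?_⟩
  simp only [Fintype.card_prod, Fintype.card_perm, Fintype.card_fin, Fintype.card_fun,
    Fintype.card_bool, Nat.factorial_succ]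
  ring

lemma spVal_succ {n : ℕ} (π : SignedPerm n) (i : Fin n) :
    spVal π (i + 1) = if π.2 i then -((π.1 i : ℤ) + 1) else (π.1 i : ℤ) + 1 := by
  simp [spVal, i.isLt]

@[simp] lemma spVal_zero {n : ℕ} (π : SignedPerm n) : spVal π 0 = 0 := by simp [spVal]

lemma abs_spVal_le {n : ℕ} (π : SignedPerm n) (p : ℕ) : |spVal π p| ≤ n := by
  unfold spVal
  rw [abs_le]
  split_ifs <;> omega

lemma spVal_insertMax_succAbove {n : ℕ} (π : SignedPerm n) (j : Fin (n + 1)) (s : Bool)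
    (i : Fin n) : spVal (insertMax π j s) (j.succAbove i + 1) = spVal π (i + 1) := by
  simp [spVal_succ]

lemma spVal_insertMax_of_le {n : ℕ} (π : SignedPerm n) (j : Fin (n + 1)) (s : Bool) {p : ℕ}
    (hp : p ≤ j) : spVal (insertMax π j s) p = spVal π p := by
  rcases p with _ | p
  · simp
  · have hpj : Fin.castSucc (⟨p, by omega⟩ : Fin n) < j := by
      rw [Fin.lt_def]; simp only [Fin.castSucc_mk]; omega
    have := spVal_insertMax_succAbove π j s ⟨p, by omega⟩
    rwa [Fin.succAbove_of_castSucc_lt _ _ hpj] at this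

lemma spVal_insertMax_self {n : ℕ} (π : SignedPerm n) (j : Fin (n + 1)) (s : Bool) :
    spVal (insertMax π j s) (j + 1) = if s then -((n : ℤ) + 1) else (n : ℤ) + 1 := by
  simp [spVal_succ]

lemma spVal_insertMax_of_lt {n : ℕ} (π : SignedPerm n) (j : Fin (n + 1)) (s : Bool) {p : ℕ}
    (hp : j < p) (hpn : p ≤ n) : spVal (insertMax π j s) (p + 1) = spVal π p := by
  obtain ⟨p, rfl⟩ := Nat.exists_eq_add_of_lt hp
  have hjp : j ≤ Fin.castSucc (⟨j + p, by omega⟩ : Fin n) := by simp [Fin.le_def]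
  have := spVal_insertMax_succAbove π j s ⟨j + p, by omega⟩
  rwa [Fin.succAbove_of_le_castSucc _ _ hjp] at this

lemma card_desSetB {n : ℕ} (π : SignedPerm n) : #(desSetB π) = descentCount (spVal π) n := rfl

/-- The insertion slots `(j, s)` at which `insertMax π j s` has as many descents as `π`. -/
def stableSlots {n : ℕ} (π : SignedPerm n) : Finset (Fin (n + 1) × Bool) :=
  {x | (x.1 : ℕ) ∈ desSetB π ∨ (x.1 = Fin.last n ∧ x.2 = false)}

lemma card_desSetB_insertMax {n : ℕ} (π : SignedPerm n) (j : Fin (n + 1)) (s : Bool) :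
    #(desSetB (insertMax π j s))
      = if (j, s) ∈ stableSlots π then #(desSetB π) else #(desSetB π) + 1 := by
  have key := descentCount_insert (v := spVal π) (w := spVal (insertMax π j s))
    (Nat.lt_succ_iff.mp j.isLt) (fun p hp => spVal_insertMax_of_le π j s hp)
    (fun p hp hpn => spVal_insertMax_of_lt π j s hp hpn)
  rw [spVal_insertMax_self] at key
  have hj := abs_le.mp (abs_spVal_le π j)
  have hj' := abs_le.mp (abs_spVal_le π (j + 1))
  have hmem : (j : ℕ) ∈ desSetB π ↔ (j : ℕ) < n ∧ spVal π (j + 1) < spVal π j := by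
    simp [desSetB]
  simp only [card_desSetB, stableSlots, mem_filter, mem_univ, true_and, hmem, Fin.ext_iff,
    Fin.val_last]
  cases s <;>
    simp only [Bool.false_eq_true, Bool.true_eq_false, ↓reduceIte, and_true, and_false,
      or_false] at key ⊢ <;>
    split_ifs at key ⊢ <;> omega

lemma card_desSetB_le {n : ℕ} (π : SignedPerm n) : #(desSetB π) ≤ n :=
  (card_filter_le _ _).trans (card_range n).le

lemma card_stableSlots {n : ℕ} (π : SignedPerm n) :
    #(stableSlots π) = 2 * #(desSetB π) + 1 := by
  have hlt : ∀ m ∈ desSetB π, m < n + 1 := fun m hm =>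
    Nat.lt_succ_of_lt (mem_range.mp (mem_filter.mp hm).1)
  have hlast : (Fin.last n, false) ∉ (desSetB π).attachFin hlt ×ˢ univ := by
    simp [mem_attachFin, desSetB]
  have hS : stableSlots π = insert (Fin.last n, false) ((desSetB π).attachFin hlt ×ˢ univ) := by
    ext ⟨j, s⟩
    simp [stableSlots, mem_attachFin, or_comm, and_comm]
  rw [hS, card_insert_of_notMem hlast, card_product, card_attachFin, card_univ,
    Fintype.card_bool, mul_comm]

lemma card_filter_card_desSetB_insertMax {n : ℕ} (π : SignedPerm n) (m : ℕ) :
    #{x : Fin (n + 1) × Bool | #(desSetB (insertMax π x.1 x.2)) = m}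
      = (if #(desSetB π) = m then 2 * m + 1 else 0)
        + (if #(desSetB π) + 1 = m then 2 * (n - #(desSetB π)) + 1 else 0) := by
  have hd := card_desSetB_le π
  simp only [card_desSetB_insertMax, Prod.mk.eta]
  by_cases h1 : #(desSetB π) = m
  · subst h1
    rw [if_pos rfl, if_neg (by omega), add_zero, ← card_stableSlots]
    congr 1
    ext x
    simp
  · by_cases h2 : #(desSetB π) + 1 = m
    · subst h2
      have : ({x | (if x ∈ stableSlots π then #(desSetB π) else #(desSetB π) + 1)
          = #(desSetB π) + 1} : Finset _) = (stableSlots π)ᶜ := by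
        ext x
        simp
      rw [if_neg h1, if_pos rfl, zero_add, this, card_compl, card_stableSlots]
      simp only [Fintype.card_prod, Fintype.card_fin, Fintype.card_bool]
      omega
    · rw [if_neg h1, if_neg h2, card_eq_zero, filter_eq_empty_iff]
      intro x _
      split_ifs <;> omega

lemma eulerianB_succ (n m : ℕ) :
    eulerianB (n + 1) m = ∑ π : SignedPerm n,
      ((if #(desSetB π) = m then 2 * m + 1 else 0)
        + (if #(desSetB π) + 1 = m then 2 * (n - #(desSetB π)) + 1 else 0)) := by
  simp_rw [← card_filter_card_desSetB_insertMax]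
  rw [eulerianB, ← card_bijective _ insertMax_bijective
    (s := {y | #(desSetB (insertMax y.1 y.2.1 y.2.2)) = m}) (fun _ => by simp)]
  simp only [card_filter, Fintype.sum_prod_type]

lemma eulerianB_succ_zero (n : ℕ) : eulerianB (n + 1) 0 = eulerianB n 0 := by
  rw [eulerianB_succ, eulerianB, card_filter]
  simp only [Nat.add_one_ne_zero, if_false, add_zero, mul_zero, zero_add]

lemma eulerianB_succ_succ (n m : ℕ) : eulerianB (n + 1) (m + 1) =
    (2 * (m + 1) + 1) * eulerianB n (m + 1) + (2 * (n - m) + 1) * eulerianB n m := by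
  rw [eulerianB_succ, sum_add_distrib, eulerianB, eulerianB, card_filter, card_filter, mul_sum,
    mul_sum]
  congr 1 <;> refine sum_congr rfl fun π _ => ?_ <;> split_ifs <;> omega

lemma eulerianB_eq_zero_of_lt {n ℓ : ℕ} (h : n < ℓ) : eulerianB n ℓ = 0 := by
  rw [eulerianB, card_eq_zero, filter_eq_empty_iff]
  exact fun π _ => ((card_desSetB_le π).trans_lt h).ne

lemma eulerianB_zero_right (n : ℕ) : eulerianB n 0 = 1 := by
  induction n with
  | zero => rfl
  | succ n ih => rw [eulerianB_succ_zero, ih]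

lemma Nat.succ_mul_choose_succ_add_mul_choose (N j : ℕ) :
    (j + 1) * N.choose (j + 1) + j * N.choose j = N * N.choose j := by
  rcases le_or_gt j N with hj | hj
  · have h := Nat.choose_succ_right_eq N j
    zify [hj] at h ⊢
    linear_combination h
  · simp [Nat.choose_eq_zero_of_lt hj, Nat.choose_eq_zero_of_lt (hj.trans (Nat.lt_succ_self j))]

lemma Nat.two_mul_add_one_mul_choose_succ_succ (m N j : ℕ) :
    (2 * m + 1) * (N + 1).choose (j + 1) + (2 * N + 1) * N.choose j
      = 2 * (m + j + 1) * N.choose j + (2 * (m + j + 1) + 1) * N.choose (j + 1) := by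
  have h := Nat.succ_mul_choose_succ_add_mul_choose N j
  rw [Nat.choose_succ_succ]
  linear_combination 2 * h.symm

lemma sum_mul_choose_succ_succ {n : ℕ} {a b : ℕ → ℕ} (h0 : b 0 = a 0)
    (hvanish : ∀ m, n < m → a m = 0)
    (hrec : ∀ m, b (m + 1) = (2 * (m + 1) + 1) * a (m + 1) + (2 * (n - m) + 1) * a m) (k : ℕ) :
    ∑ ℓ ∈ range (k + 2), b ℓ * (n + 1 - ℓ).choose (k + 1 - ℓ)
      = 2 * (k + 1) * ∑ ℓ ∈ range (k + 1), a ℓ * (n - ℓ).choose (k - ℓ)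
        + (2 * (k + 1) + 1)
          * ∑ ℓ ∈ range (k + 2), a ℓ * (n - ℓ).choose (k + 1 - ℓ) := by
  have hterm : ∀ m ∈ range (k + 1),
      (2 * m + 1) * a m * (n + 1 - m).choose (k + 1 - m)
        + (2 * (n - m) + 1) * a m * (n - m).choose (k - m)
      = 2 * (k + 1) * (a m * (n - m).choose (k - m))
        + (2 * (k + 1) + 1) * (a m * (n - m).choose (k + 1 - m)) := by
    intro m hm
    rcases le_or_gt m n with hmn | hmn
    · obtain ⟨j, rfl⟩ := Nat.exists_eq_add_of_le (Nat.lt_succ_iff.mp (mem_range.mp hm))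
      obtain ⟨N, rfl⟩ := Nat.exists_eq_add_of_le hmn
      have h := Nat.two_mul_add_one_mul_choose_succ_succ m N j
      simp only [show m + N + 1 - m = N + 1 by omega, show m + j + 1 - m = j + 1 by omega,
        Nat.add_sub_cancel_left] at h ⊢
      linear_combination a m * h
    · simp [hvanish m hmn]
  calc ∑ ℓ ∈ range (k + 2), b ℓ * (n + 1 - ℓ).choose (k + 1 - ℓ)
      = ∑ m ∈ range (k + 1), (2 * (m + 1) + 1) * a (m + 1) * (n - m).choose (k - m)
          + a 0 * (n + 1).choose (k + 1)
          + ∑ m ∈ range (k + 1), (2 * (n - m) + 1) * a m * (n - m).choose (k - m) := by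
        simp only [sum_range_succ' _ (k + 1), hrec, h0, add_mul, sum_add_distrib,
          Nat.add_sub_add_right, Nat.sub_zero]
        ring
    _ = ∑ m ∈ range (k + 2), (2 * m + 1) * a m * (n + 1 - m).choose (k + 1 - m)
          + ∑ m ∈ range (k + 1), (2 * (n - m) + 1) * a m * (n - m).choose (k - m) := by
        rw [sum_range_succ' _ (k + 1)]
        simp only [Nat.add_sub_add_right, Nat.sub_zero]
        ring
    _ = _ := by
        rw [sum_range_succ _ (k + 1), sum_range_succ _ (k + 1), add_right_comm, ← sum_add_distrib,
          sum_congr rfl hterm, sum_add_distrib, ← mul_sum, ← mul_sum]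
        simp only [Nat.sub_self, Nat.choose_zero_right]
        ring

lemma stirlingB_zero_right (n : ℕ) : stirlingB n 0 = 1 := by
  induction n with
  | zero => rfl
  | succ n ih => rw [stirlingB, ih]

theorem stmt2 (n k : ℕ) :
    2 ^ k * Nat.factorial k * stirlingB n k =
      ∑ ℓ ∈ Finset.range (k + 1), eulerianB n ℓ * Nat.choose (n - ℓ) (k - ℓ) := by
  induction n generalizing k with
  | zero =>
    cases k with
    | zero => simp [stirlingB, eulerianB_zero_right]
    | succ k =>
      rw [sum_range_succ']
      simp [stirlingB, eulerianB_eq_zero_of_lt]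
  | succ n ih =>
    cases k with
    | zero => simp [stirlingB_zero_right, eulerianB_zero_right]
    | succ k =>
      rw [sum_mul_choose_succ_succ (eulerianB_succ_zero n) (fun m => eulerianB_eq_zero_of_lt)
        (eulerianB_succ_succ n), ← ih, ← ih, stirlingB, Nat.factorial_succ]
      ring
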